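/- Consider the backlog dynamics δ̇(t) = λ̄(t) - u(t) with switching arrival rate λ̄ = λ when δ ≤ δ_min and λ̄ = ρ·λ when δ ≥ δ_max, where 0 < ρ < 1, 0 ≤ δ_min < δ_max, and the aggregate scheduling rate satisfies ρ·λ < u(t) ≤ λ for all t. If δ(0) ∈ [δ_min, δ_max], then δ(t) ∈ [δ_min, δ_max] for all t ≥ 0. -/

import Mathlib

open Set

/-- Comparing `-f` with the barrier `-c + ε (1 + (x - a))`, whose slope `ε > 0` turns the
non-strict sign condition on `f'` into the strict one required by the fencing theorem. -/
theorem le_image_of_deriv_nonneg_of_le {f f' : ℝ → ℝ} {a b c : ℝ}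
    (hf : ContinuousOn f (Icc a b)) (hf' : ∀ x ∈ Ico a b, HasDerivWithinAt f (f' x) (Ici x) x)
    (ha : c ≤ f a) (bound : ∀ x ∈ Ico a b, f x ≤ c → 0 ≤ f' x) :
    ∀ ⦃x⦄, x ∈ Icc a b → c ≤ f x := by
  intro x hx
  have hK : 0 < 1 + (x - a) := by linarith [hx.1]
  have fenced : ∀ ε > 0, -f x ≤ -c + ε * (1 + (x - a)) := by
    intro ε hε
    have hB : ∀ y, HasDerivAt (fun y ↦ -c + ε * (1 + (y - a))) ε y := fun y ↦ by
      simpa using (((hasDerivAt_id y).sub_const a).const_add 1).const_mul ε |>.const_add (-c)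
    have hstart : -f a ≤ -c + ε * (1 + (a - a)) := by rw [sub_self]; linarith
    refine image_le_of_deriv_right_lt_deriv_boundary hf.neg (fun y hy ↦ (hf' y hy).neg)
      hstart hB (fun y hy hfy ↦ ?_) hx
    have hbarrier_pos : 0 < ε * (1 + (y - a)) := mul_pos hε (by linarith [hy.1])
    have hy_le : f y ≤ c := by simp only [Pi.neg_apply] at hfy; linarith
    linarith [bound y hy hy_le]
  refine le_of_forall_pos_le_add fun ε hε ↦ ?_
  have := fenced (ε / (1 + (x - a))) (div_pos hε hK)
  rw [div_mul_cancel₀ ε hK.ne'] at this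
  linarith

theorem mem_Icc_of_hasDerivAt_of_boundary {f f' : ℝ → ℝ} {lo hi t₀ : ℝ}
    (hf : ∀ t, HasDerivAt f (f' t) t) (h₀ : f t₀ ∈ Icc lo hi)
    (hlo : ∀ t, f t ≤ lo → 0 ≤ f' t) (hhi : ∀ t, hi ≤ f t → f' t ≤ 0) :
    ∀ t, t₀ ≤ t → f t ∈ Icc lo hi := by
  intro t ht
  have hcont : ContinuousOn f (Icc t₀ t) := fun x _ ↦ (hf x).continuousAt.continuousWithinAt
  have hmem : t ∈ Icc t₀ t := ⟨ht, le_rfl⟩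
  constructor
  · exact le_image_of_deriv_nonneg_of_le hcont (fun x _ ↦ (hf x).hasDerivWithinAt) h₀.1
      (fun x _ ↦ hlo x) hmem
  · have := le_image_of_deriv_nonneg_of_le hcont.neg (fun x _ ↦ (hf x).neg.hasDerivWithinAt)
      (neg_le_neg h₀.2) (fun x _ hx ↦ neg_nonneg.2 (hhi x (le_of_neg_le_neg hx))) hmem
    exact le_of_neg_le_neg this

theorem backlog_invariant_general (δ lamBar u : ℝ → ℝ) (lam ρ δmin δmax : ℝ)
    (hswitch_lo : ∀ t, δ t ≤ δmin → lamBar t = lam)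
    (hswitch_hi : ∀ t, δ t ≥ δmax → lamBar t = ρ * lam)
    (hderiv : ∀ t, HasDerivAt δ (lamBar t - u t) t)
    (hu : ∀ t, ρ * lam < u t ∧ u t ≤ lam)
    (h0 : δ 0 ∈ Set.Icc δmin δmax) :
    ∀ t : ℝ, 0 ≤ t → δ t ∈ Set.Icc δmin δmax := by
  refine mem_Icc_of_hasDerivAt_of_boundary hderiv h0 (fun t ht ↦ ?_) (fun t ht ↦ ?_)
  · rw [hswitch_lo t ht]
    linarith [(hu t).2]
  · rw [hswitch_hi t ht]
    linarith [(hu t).1]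

theorem backlog_invariant (δ lamBar u : ℝ → ℝ) (lam ρ δmin δmax : ℝ)
    (hρ : 0 < ρ) (hρ1 : ρ < 1) (hδmin : 0 ≤ δmin) (hδ : δmin < δmax)
    (hlam : 0 < lam)
    (hswitch_lo : ∀ t, δ t ≤ δmin → lamBar t = lam)
    (hswitch_hi : ∀ t, δ t ≥ δmax → lamBar t = ρ * lam)
    (hderiv : ∀ t, HasDerivAt δ (lamBar t - u t) t)
    (hu : ∀ t, ρ * lam < u t ∧ u t ≤ lam)
    (h0 : δ 0 ∈ Set.Icc δmin δmax) :
    ∀ t : ℝ, 0 ≤ t → δ t ∈ Set.Icc δmin δmax :=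
  backlog_invariant_general δ lamBar u lam ρ δmin δmax hswitch_lo hswitch_hi hderiv hu h0
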